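/- arXiv:1609.04087 — 2 statements merged into one kernel-verified Lean document; each statement's English description precedes it below -/
import Mathlib

section
/- Let G be a parity game, s = (r, p) a PP⁺ state with α := p mod 2, and R ⊆ Pos(G_s) an α-region in the subgame G_s that is α-closed in G_s but α-open in the whole game G. Then the best escape priority q := bep^ᾱ(R, r) is well defined, has parity α (q ≡ α mod 2), and is strictly greater than p. -/
open Filter Set

/-- A parity game: disjoint finite sets of positions of players 0 and 1, a left-total
move relation among positions, and a priority function. -/
structure PGame (V : Type*) where
  pos0 : Set V
  pos1 : Set V
  mv : V → V → Prop
  pr : V → ℕ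
  disj : Disjoint pos0 pos1
  finpos : (pos0 ∪ pos1).Finite
  mv_mem : ∀ ⦃v u : V⦄, mv v u → v ∈ pos0 ∪ pos1 ∧ u ∈ pos0 ∪ pos1
  leftTotal : ∀ v ∈ pos0 ∪ pos1, ∃ u, mv v u

namespace PGame

variable {V : Type*}

/-- The set of positions of the game. -/
def pos (G : PGame V) : Set V := G.pos0 ∪ G.pos1

/-- The positions of player `α` (`α ∈ {0,1}`; the opponent of `α` is `1 - α`). -/
def posOf (G : PGame V) (α : ℕ) : Set V := if α = 0 then G.pos0 else G.pos1

/-- The maximal priority `pr(G)` of the game. -/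
noncomputable def maxPr (G : PGame V) : ℕ := sSup (G.pr '' G.pos)

/-- `pre^α(U)`: positions from which player `α` can force reaching `U` in one move. -/
def pre (G : PGame V) (α : ℕ) (U : Set V) : Set V :=
  {v ∈ G.posOf α | ∃ u ∈ U, G.mv v u} ∪
    {v ∈ G.posOf (1 - α) | ∀ u, G.mv v u → u ∈ U}

lemma pre_mono (G : PGame V) (α : ℕ) : Monotone (G.pre α) := by
  intro U U' h v hv
  rcases hv with ⟨h1, u, hu, hm⟩ | ⟨h1, h2⟩
  · exact Or.inl ⟨h1, u, h hu, hm⟩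
  · exact Or.inr ⟨h1, fun u hm => h (h2 u hm)⟩

/-- `atr^α(A)`: the `α`-attractor of `A`, the least fixed point of `U ↦ A ∪ pre^α(U)`. -/
noncomputable def atr (G : PGame V) (α : ℕ) (A : Set V) : Set V :=
  OrderHom.lfp ⟨fun U => A ∪ G.pre α U, fun U U' h => union_subset_union subset_rfl (G.pre_mono α h)⟩

/-- `A` is `α`-maximal if it coincides with its own `α`-attractor. -/
def IsMaximal (G : PGame V) (α : ℕ) (A : Set V) : Prop := G.atr α A = A

/-- `esc^α(Q)`: the `α`-escape of `Q`. -/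
def esc (G : PGame V) (α : ℕ) (Q : Set V) : Set V := G.pre α (G.pos \ Q) ∩ Q

/-- `int^α(Q)`: the `α`-interior of `Q`. -/
def intOf (G : PGame V) (α : ℕ) (Q : Set V) : Set V := (Q ∩ G.posOf α) \ G.esc α Q

/-- A positional `α`-strategy on `U`: a partial function (encoded with `Option`) from
`U ∩ Pos_α` to `U` compatible with the move relation. -/
def IsStrat (G : PGame V) (α : ℕ) (U : Set V) (σ : V → Option V) : Prop :=
  ∀ v u, σ v = some u → v ∈ U ∩ G.posOf α ∧ u ∈ U ∧ G.mv v u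

-- One step of the play function: from `v`, player 0 positions move according to `σ0`,
-- the others according to `σ1`.
open Classical in
noncomputable def step (G : PGame V) (σ0 σ1 : V → Option V) (v : V) : Option V :=
  if v ∈ G.pos0 then σ0 v else σ1 v

/-- The maximal play induced by the pair of strategies `(σ0, σ1)` from `v`,
as a sequence of `Option`s (`none` from the point the play has stopped on). -/
noncomputable def play (G : PGame V) (σ0 σ1 : V → Option V) (v : V) : ℕ → Option V
  | 0 => some v
  | n + 1 => (G.play σ0 σ1 v n).bind (G.step σ0 σ1)

/-- The priorities visited along a play (defaulting to `0` after the play has stopped). -/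
noncomputable def playPr (G : PGame V) (σ0 σ1 : V → Option V) (v : V) (n : ℕ) : ℕ :=
  ((G.play σ0 σ1 v n).map G.pr).getD 0

/-- `Q` is a quasi `α`-dominion in `G`. -/
noncomputable def QuasiDom (G : PGame V) (α : ℕ) (Q : Set V) : Prop :=
  Q.Nonempty ∧ Q ⊆ G.pos ∧
  ∃ σa : V → Option V, G.IsStrat α Q σa ∧
    ∀ σb : V → Option V, G.IsStrat (1 - α) Q σb →
      G.intOf (1 - α) Q ⊆ {v | (σb v).isSome} →
      ∀ v ∈ Q,
        (((∀ n, (G.play (if α = 0 then σa else σb) (if α = 0 then σb else σa) v n).isSome) →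
          Filter.limsup (G.playPr (if α = 0 then σa else σb) (if α = 0 then σb else σa) v)
            Filter.atTop % 2 = α) ∧
        (∀ n u, G.play (if α = 0 then σa else σb) (if α = 0 then σb else σa) v n = some u →
          G.play (if α = 0 then σa else σb) (if α = 0 then σb else σa) v (n + 1) = none →
          u ∈ G.esc (1 - α) Q))

/-- A quasi `α`-dominion `R` is an `α`-region of `G` when `pr(G) ≡₂ α` and all the
positions in its `ᾱ`-escape have the maximal priority `pr(G)`. -/
noncomputable def IsRegion (G : PGame V) (α : ℕ) (R : Set V) : Prop :=
  G.QuasiDom α R ∧ G.maxPr % 2 = α ∧ ∀ v ∈ G.esc (1 - α) R, G.pr v = G.maxPr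

/-- `D` is an `α`-dominion in `G`: player `α` has a strategy defined on all of
`D ∩ Pos_α` such that all induced paths starting in `D` stay in `D` forever and are
winning for `α`. -/
noncomputable def Dominion (G : PGame V) (α : ℕ) (D : Set V) : Prop :=
  D ⊆ G.pos ∧
  ∃ σ : V → V, (∀ v ∈ D ∩ G.posOf α, σ v ∈ D ∧ G.mv v (σ v)) ∧
    ∀ π : ℕ → V, π 0 ∈ D →
      (∀ i, (π i ∈ G.posOf α → π (i + 1) = σ (π i)) ∧
            (π i ∈ G.posOf (1 - α) → G.mv (π i) (π (i + 1)))) →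
      (∀ i, π i ∈ D) ∧ Filter.limsup (fun i => G.pr (π i)) Filter.atTop % 2 = α

/-- The winning region of player `α` in `G`. -/
noncomputable def Win (G : PGame V) (α : ℕ) : Set V :=
  {v ∈ G.pos | ∃ σ : V → V, (∀ u ∈ G.posOf α, G.mv u (σ u)) ∧
    ∀ π : ℕ → V, π 0 = v →
      (∀ i, (π i ∈ G.posOf α → π (i + 1) = σ (π i)) ∧
            (π i ∈ G.posOf (1 - α) → G.mv (π i) (π (i + 1)))) →
      Filter.limsup (fun i => G.pr (π i)) Filter.atTop % 2 = α}

/-- The set of positions of the subgame `G ∖ U`: the largest subset of `Pos ∖ U` on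
which the restricted move relation is still left-total. -/
def subPos (G : PGame V) (U : Set V) : Set V :=
  ⋃₀ {S : Set V | S ⊆ G.pos \ U ∧ ∀ v ∈ S, ∃ u ∈ S, G.mv v u}

lemma subPos_subset (G : PGame V) (U : Set V) : G.subPos U ⊆ G.pos \ U := by
  rintro v ⟨S, ⟨hS1, _⟩, hvS⟩
  exact hS1 hvS

lemma subPos_step (G : PGame V) (U : Set V) :
    ∀ v ∈ G.subPos U, ∃ u ∈ G.subPos U, G.mv v u := by
  rintro v ⟨S, hS, hvS⟩
  rcases hS.2 v hvS with ⟨u, huS, hm⟩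
  exact ⟨u, ⟨S, hS, huS⟩, hm⟩

/-- The subgame `G ∖ U`: the maximal subgame of `G` whose positions are contained in
`Pos ∖ U`, with the restricted move relation. -/
noncomputable def sub (G : PGame V) (U : Set V) : PGame V where
  pos0 := G.pos0 ∩ G.subPos U
  pos1 := G.pos1 ∩ G.subPos U
  mv v u := G.mv v u ∧ v ∈ G.subPos U ∧ u ∈ G.subPos U
  pr := G.pr
  disj := G.disj.mono inter_subset_left inter_subset_left
  finpos := G.finpos.subset (union_subset_union inter_subset_left inter_subset_left)
  mv_mem := by
    rintro v u ⟨hm, hv, hu⟩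
    have hv' : v ∈ G.pos := (G.subPos_subset U hv).1
    have hu' : u ∈ G.pos := (G.subPos_subset U hu).1
    constructor
    · rcases hv' with h | h
      · exact Or.inl ⟨h, hv⟩
      · exact Or.inr ⟨h, hv⟩
    · rcases hu' with h | h
      · exact Or.inl ⟨h, hu⟩
      · exact Or.inr ⟨h, hu⟩
  leftTotal := by
    intro v hv
    have hv' : v ∈ G.subPos U := by
      rcases hv with ⟨_, h⟩ | ⟨_, h⟩ <;> exact h
    rcases G.subPos_step U v hv' with ⟨u, hu, hm⟩
    exact ⟨u, hm, hv', hu⟩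

end PGame

namespace PGame

variable {V : Type*}

/-- The subgame `G_r^{≤ p} := G ∖ dom(r^{(> p)})` induced by the priority function `r`. -/
noncomputable def subLE (G : PGame V) (r : V → ℕ) (p : ℕ) : PGame V :=
  G.sub {v ∈ G.pos | p < r v}

/-- `m` is the maximisation of the priority function `r`: for every `q ∈ rng(r)`, with
`β := q mod 2`, the set `m⁻¹(q)` is the `β`-attractor, in the subgame `G_m^{≤ q}`, of
`r⁻¹(q) ∩ Pos(G_m^{≤ q})`. -/
noncomputable def IsMaximization (G : PGame V) (r m : V → ℕ) : Prop :=
  m '' G.pos ⊆ r '' G.pos ∧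
  ∀ q ∈ r '' G.pos,
    {v ∈ G.pos | m v = q} =
      (G.subLE m q).atr (q % 2) {v ∈ (G.subLE m q).pos | r v = q}

/-- `r` is a region function: for every `q` in the range of its maximisation `m`, the
set `r⁻¹(q) ∩ Pos(G_m^{≤ q})` is a `(q mod 2)`-region in the subgame `G_m^{≤ q}`. -/
noncomputable def IsRegionFun (G : PGame V) (r : V → ℕ) : Prop :=
  ∃ m : V → ℕ, G.IsMaximization r m ∧
    ∀ q ∈ m '' G.pos,
      (G.subLE m q).IsRegion (q % 2) {v ∈ (G.subLE m q).pos | r v = q}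

/-- `r` is maximal above `p`: it coincides with its maximisation on all positions of
measure greater than `p`. -/
noncomputable def MaximalAbove (G : PGame V) (r : V → ℕ) (p : ℕ) : Prop :=
  ∃ m : V → ℕ, G.IsMaximization r m ∧
    ∀ v ∈ G.pos, (p < r v ∨ p < m v) → r v = m v

/-- A PP⁺ state: a region function `r` together with a current priority `p ∈ rng(r)`
such that `r` is maximal above `p`. -/
structure PPState {V : Type*} (G : PGame V) where
  r : V → ℕ
  p : ℕ
  regFun : G.IsRegionFun r
  mem : p ∈ r '' G.pos
  maxAbove : G.MaximalAbove r p

/-- The subgame `G_s` at a PP⁺ state `s = (r, p)`. -/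
noncomputable def atState (G : PGame V) (s : PPState G) : PGame V := G.subLE s.r s.p

/-- `r₁^{(> q)} = r₂^{(> q)}`: the two priority functions agree above `q`. -/
def restrEqAbove (G : PGame V) (r1 r2 : V → ℕ) (q : ℕ) : Prop :=
  ∀ v ∈ G.pos, (q < r1 v ∨ q < r2 v) → r1 v = r2 v

/-- The strict order `s₁ ⋖ s₂` on PP⁺ states: either some region of measure `q ≥ p₁`
strictly grew while all higher ones are unchanged, or the region functions coincide and
the current priority decreased. -/
def ppLt (G : PGame V) (s1 s2 : PPState G) : Prop :=
  (∃ q ∈ s1.r '' G.pos, s1.p ≤ q ∧ G.restrEqAbove s1.r s2.r q ∧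
      {v ∈ G.pos | s2.r v = q} ⊂ {v ∈ G.pos | s1.r v = q}) ∨
  ((∀ v ∈ G.pos, s1.r v = s2.r v) ∧ s1.p < s2.p)

/-- `bep^β(R, r)`: the best escape priority for player `β` from `R` w.r.t. `r`, i.e. the
minimal `r`-measure of a position outside `R` reachable by a move of a `β`-position
of `R`. -/
noncomputable def bep (G : PGame V) (β : ℕ) (R : Set V) (r : V → ℕ) : ℕ :=
  sInf {n | ∃ v u, v ∈ R ∩ G.posOf β ∧ G.mv v u ∧ u ∈ G.pos \ R ∧ r u = n}

/-- The query operator: at state `(r, p)` it returns the `α`-attractor, in the subgame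
`G_r^{≤ p}`, of the set of positions of measure `p`, together with `α := p mod 2`. -/
noncomputable def ppQuery (G : PGame V) (r : V → ℕ) (p : ℕ) : Set V × ℕ :=
  ((G.subLE r p).atr (p % 2) {v ∈ (G.subLE r p).pos | r v = p}, p % 2)

/-- Compatibility for PP⁺: an open quasi dominion pair `(R, α)` of `G` is compatible
with `s = (r, p)` iff `R` is an `α`-region in `G_s` and, if `R` is `α`-open in `G_s`,
then `R` is the `α`-attractor in `G_s` of `r⁻¹(p)`. -/
noncomputable def ppCompat (G : PGame V) (s : PPState G) (Rα : Set V × ℕ) : Prop :=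
  G.QuasiDom Rα.2 Rα.1 ∧ G.esc (1 - Rα.2) Rα.1 ≠ ∅ ∧
  (G.atState s).IsRegion Rα.2 Rα.1 ∧
  ((G.atState s).esc (1 - Rα.2) Rα.1 ≠ ∅ →
    Rα.1 = (G.atState s).atr Rα.2 {v ∈ (G.atState s).pos | s.r v = s.p})

open Classical in
/-- The PP⁺ successor operator, returning the components `(r★, p★)` of the next state:
if `R` is open in the subgame `G_s` it is assigned measure `p` and the search moves to
the next lower priority; otherwise `R` is promoted to `p★ := bep^ᾱ(R, r)` and all the
regions of the opponent parity with measure lower than `p★` are reset to their original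
priorities. -/
noncomputable def ppSucc (G : PGame V) (s : PPState G) (Rα : Set V × ℕ) :
    (V → ℕ) × ℕ :=
  if (G.atState s).esc (1 - Rα.2) Rα.1 ≠ ∅ then
    ((fun v => if v ∈ Rα.1 then s.p else s.r v),
      sSup {q | ∃ v ∈ G.pos, (if v ∈ Rα.1 then s.p else s.r v) = q ∧ q < s.p})
  else
    ((fun v => if v ∈ Rα.1 then G.bep (1 - Rα.2) Rα.1 s.r
        else if G.bep (1 - Rα.2) Rα.1 s.r ≤ s.r v ∨
                s.r v % 2 = G.bep (1 - Rα.2) Rα.1 s.r % 2 then s.r v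
        else G.pr v),
      G.bep (1 - Rα.2) Rα.1 s.r)

end PGame


namespace PGame

variable {V : Type*}

lemma atr_unfold (G : PGame V) (α : ℕ) (A : Set V) :
    G.atr α A = A ∪ G.pre α (G.atr α A) := (OrderHom.map_lfp _).symm

lemma pre_atr_subset (G : PGame V) (α : ℕ) (A : Set V) :
    G.pre α (G.atr α A) ⊆ G.atr α A := by
  intro x hx
  rw [atr_unfold]
  exact Or.inr hx

lemma sub_pos_eq (G : PGame V) (U : Set V) :
    (G.sub U).pos = G.pos ∩ G.subPos U := by
  show (G.pos0 ∩ _ ∪ G.pos1 ∩ _) = (G.pos0 ∪ G.pos1) ∩ _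
  rw [Set.union_inter_distrib_right]

lemma sub_posOf_eq (G : PGame V) (U : Set V) (β : ℕ) :
    (G.sub U).posOf β = G.posOf β ∩ G.subPos U := by
  unfold posOf
  split <;> rfl

lemma sub_mv_iff (G : PGame V) (U : Set V) (v u : V) :
    (G.sub U).mv v u ↔ G.mv v u ∧ v ∈ G.subPos U ∧ u ∈ G.subPos U := Iff.rfl

lemma posOf_cases (G : PGame V) (β : ℕ) {v : V} (hv : v ∈ G.pos) :
    v ∈ G.posOf β ∨ v ∈ G.posOf (1 - β) := by
  unfold posOf
  rcases hv with h | h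
  · by_cases hb : β = 0
    · exact Or.inl (by rw [if_pos hb]; exact h)
    · have h1 : 1 - β = 0 := by omega
      exact Or.inr (by rw [if_pos h1]; exact h)
  · by_cases hb : β = 0
    · have h1 : (1 : ℕ) - β ≠ 0 := by omega
      exact Or.inr (by rw [if_neg h1]; exact h)
    · exact Or.inl (by rw [if_neg hb]; exact h)

/-- Key structural lemma: if `m` is a maximisation, then from every position of
measure at most `q` there is a move staying in measure at most `q`. -/
lemma exists_mv_le (G : PGame V) {r m : V → ℕ} (hmax : G.IsMaximization r m) :
    ∀ q, ∀ v ∈ G.pos, m v ≤ q → ∃ u, G.mv v u ∧ u ∈ G.pos ∧ m u ≤ q := by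
  have hfin : (m '' G.pos).Finite := G.finpos.image m
  set N := sSup (m '' G.pos) with hN
  have base : ∀ q, N ≤ q → ∀ v ∈ G.pos, m v ≤ q →
      ∃ u, G.mv v u ∧ u ∈ G.pos ∧ m u ≤ q := by
    intro q hNq v hv _
    obtain ⟨u, hu⟩ := G.leftTotal v hv
    have hupos : u ∈ G.pos := (G.mv_mem hu).2
    exact ⟨u, hu, hupos, le_trans (le_csSup hfin.bddAbove ⟨u, hupos, rfl⟩) hNq⟩
  have key : ∀ k q, N - q ≤ k → ∀ v ∈ G.pos, m v ≤ q →
      ∃ u, G.mv v u ∧ u ∈ G.pos ∧ m u ≤ q := by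
    intro k
    induction k with
    | zero =>
      intro q hq
      exact base q (by omega)
    | succ k ih =>
      intro q hq v hv hmv
      by_cases hNq : N ≤ q
      · exact base q hNq v hv hmv
      push_neg at hNq
      have hNmem : N ∈ m '' G.pos :=
        Nat.sSup_mem ⟨m v, ⟨v, hv, rfl⟩⟩ hfin.bddAbove
      have hTne : {t | t ∈ m '' G.pos ∧ q < t}.Nonempty := ⟨N, hNmem, hNq⟩
      set q' := sInf {t | t ∈ m '' G.pos ∧ q < t} with hq'def
      have hq'T : q' ∈ {t | t ∈ m '' G.pos ∧ q < t} := Nat.sInf_mem hTne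
      have hqq' : q < q' := hq'T.2
      have hA' : ∀ w ∈ G.pos, m w ≤ q' → ∃ u, G.mv w u ∧ u ∈ G.pos ∧ m u ≤ q' :=
        ih q' (by omega)
      -- the subgame positions at level q' are exactly the positions of measure ≤ q'
      have hSP : G.subPos {w ∈ G.pos | q' < m w} = {w ∈ G.pos | m w ≤ q'} := by
        apply Set.Subset.antisymm
        · intro w hw
          have h := G.subPos_subset _ hw
          exact ⟨h.1, by by_contra hc; exact h.2 ⟨h.1, by omega⟩⟩
        · intro w hw
          refine ⟨{x ∈ G.pos | m x ≤ q'}, ⟨?_, ?_⟩, hw⟩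
          · intro x hx
            exact ⟨hx.1, fun hc => absurd hc.2 (not_lt.2 hx.2)⟩
          · intro x hx
            obtain ⟨u, hu1, hu2, hu3⟩ := hA' x hx.1 hx.2
            exact ⟨u, ⟨hu2, hu3⟩, hu1⟩
      have hq'r : q' ∈ r '' G.pos := hmax.1 hq'T.1
      have heq := hmax.2 q' hq'r
      have hvSP : v ∈ G.subPos {w ∈ G.pos | q' < m w} := by
        rw [hSP]; exact ⟨hv, by omega⟩
      have hvG' : v ∈ (G.subLE m q').pos := by
        show v ∈ (G.sub _).pos
        rw [sub_pos_eq]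
        exact ⟨hv, hvSP⟩
      have hpreA : (G.subLE m q').pre (q' % 2) {w ∈ G.pos | m w = q'} ⊆
          {w ∈ G.pos | m w = q'} := by
        rw [heq]
        exact pre_atr_subset _ _ _
      have hnotA : v ∉ {w ∈ G.pos | m w = q'} := fun h => by
        have := h.2; omega
      have hmove : ∃ u, (G.subLE m q').mv v u ∧ u ∉ {w ∈ G.pos | m w = q'} := by
        by_contra hc
        push_neg at hc
        rcases G.posOf_cases (q' % 2) hv with hvp | hvp
        · obtain ⟨u, hu⟩ := (G.subLE m q').leftTotal v hvG'
          refine hnotA (hpreA (Or.inl ⟨?_, u, hc u hu, hu⟩))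
          show v ∈ (G.sub _).posOf (q' % 2)
          rw [sub_posOf_eq]
          exact ⟨hvp, hvSP⟩
        · refine hnotA (hpreA (Or.inr ⟨?_, fun u hu => hc u hu⟩))
          show v ∈ (G.sub _).posOf (1 - q' % 2)
          rw [sub_posOf_eq]
          exact ⟨hvp, hvSP⟩
      obtain ⟨u, humv, hunA⟩ := hmove
      have huSP : u ∈ G.subPos {w ∈ G.pos | q' < m w} := humv.2.2
      rw [hSP] at huSP
      have hmu : m u ≤ q := by
        rcases lt_or_ge q (m u) with h | h
        · exfalso
          have hle : q' ≤ m u := Nat.sInf_le ⟨⟨u, huSP.1, rfl⟩, h⟩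
          exact hunA ⟨huSP.1, le_antisymm huSP.2 hle⟩
        · exact h
      exact ⟨u, humv.1, huSP.1, hmu⟩
  intro q v hv hmv
  exact key (N - q) q le_rfl v hv hmv

lemma subPos_eq_of_max (G : PGame V) {r m : V → ℕ} (hmax : G.IsMaximization r m)
    (q : ℕ) :
    G.subPos {w ∈ G.pos | q < m w} = {w ∈ G.pos | m w ≤ q} := by
  apply Set.Subset.antisymm
  · intro w hw
    have h := G.subPos_subset _ hw
    exact ⟨h.1, by by_contra hc; exact h.2 ⟨h.1, by omega⟩⟩
  · intro w hw
    refine ⟨{x ∈ G.pos | m x ≤ q}, ⟨?_, ?_⟩, hw⟩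
    · intro x hx
      exact ⟨hx.1, fun hc => absurd hc.2 (not_lt.2 hx.2)⟩
    · intro x hx
      obtain ⟨u, hu1, hu2, hu3⟩ := G.exists_mv_le hmax q x hx.1 hx.2
      exact ⟨u, ⟨hu2, hu3⟩, hu1⟩

end PGame

/-- **Best escape priority.** Let `s = (r, p)` be a PP⁺ state, `α := p mod 2`, and `R`
an `α`-region in the subgame `G_s` that is `α`-closed in `G_s` but `α`-open in the whole
game `G`. Then the best escape priority `bep^ᾱ(R, r)` is well defined (the set of
measures of escape targets is nonempty), has parity `α` and is strictly greater
than `p`. -/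
theorem bep_parity_and_bound {V : Type*} (G : PGame V) (s : PGame.PPState G)
    (R : Set V) (hsub : R ⊆ (G.atState s).pos)
    (hreg : (G.atState s).IsRegion (s.p % 2) R)
    (hclosed : (G.atState s).esc (1 - s.p % 2) R = ∅)
    (hopen : G.esc (1 - s.p % 2) R ≠ ∅) :
    {n | ∃ v u, v ∈ R ∩ G.posOf (1 - s.p % 2) ∧ G.mv v u ∧ u ∈ G.pos \ R ∧ s.r u = n}.Nonempty ∧
    G.bep (1 - s.p % 2) R s.r % 2 = s.p % 2 ∧
    s.p < G.bep (1 - s.p % 2) R s.r := by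
  obtain ⟨m, hmax, hagree⟩ := s.maxAbove
  have hUeq : {v ∈ G.pos | s.p < s.r v} = {v ∈ G.pos | s.p < m v} := by
    ext w
    constructor
    · rintro ⟨hw, h⟩
      exact ⟨hw, by rw [← hagree w hw (Or.inl h)]; exact h⟩
    · rintro ⟨hw, h⟩
      exact ⟨hw, by rw [hagree w hw (Or.inr h)]; exact h⟩
  have hSPp : G.subPos {v ∈ G.pos | s.p < s.r v} = {w ∈ G.pos | m w ≤ s.p} := by
    rw [hUeq]
    exact G.subPos_eq_of_max hmax s.p
  have hsub' : R ⊆ G.pos ∩ G.subPos {v ∈ G.pos | s.p < s.r v} := by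
    intro v hv
    have h : v ∈ (G.sub {v ∈ G.pos | s.p < s.r v}).pos := hsub hv
    rwa [PGame.sub_pos_eq] at h
  have claim2 : ∀ n, n ∈ {n | ∃ v u, v ∈ R ∩ G.posOf (1 - s.p % 2) ∧ G.mv v u ∧
      u ∈ G.pos \ R ∧ s.r u = n} → s.p < n ∧ n % 2 = s.p % 2 := by
    rintro n ⟨v, u, ⟨hvR, hvpos⟩, hmv, ⟨hupos, hunR⟩, hn⟩
    have hvG : v ∈ G.pos := (hsub' hvR).1
    have hvSP : v ∈ G.subPos {v ∈ G.pos | s.p < s.r v} := (hsub' hvR).2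
    have hmvle : m v ≤ s.p := by
      have h := hvSP
      rw [hSPp] at h
      exact h.2
    have hbound : s.p < s.r u := by
      by_contra hc
      push_neg at hc
      have hmu : m u ≤ s.p := by
        by_contra hc2
        push_neg at hc2
        have := hagree u hupos (Or.inr hc2)
        omega
      have huSP : u ∈ G.subPos {v ∈ G.pos | s.p < s.r v} := by
        rw [hSPp]
        exact ⟨hupos, hmu⟩
      have hesc : v ∈ (G.atState s).esc (1 - s.p % 2) R := by
        refine ⟨Or.inl ⟨?_, u, ⟨?_, hunR⟩, hmv, hvSP, huSP⟩, hvR⟩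
        · show v ∈ (G.sub {v ∈ G.pos | s.p < s.r v}).posOf (1 - s.p % 2)
          rw [PGame.sub_posOf_eq]
          exact ⟨hvpos, hvSP⟩
        · show u ∈ (G.sub {v ∈ G.pos | s.p < s.r v}).pos
          rw [PGame.sub_pos_eq]
          exact ⟨hupos, huSP⟩
      exact absurd (hclosed ▸ hesc) (Set.notMem_empty v)
    have hru_m : s.r u = m u := hagree u hupos (Or.inl hbound)
    have hpar : s.r u % 2 = s.p % 2 := by
      by_contra hc
      have hq2 : s.r u % 2 = 1 - s.p % 2 := by omega
      set q := s.r u with hqdef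
      have hqm : q ∈ m '' G.pos := ⟨u, hupos, hru_m.symm⟩
      have heq := hmax.2 q (hmax.1 hqm)
      have hSPq : G.subPos {w ∈ G.pos | q < m w} = {w ∈ G.pos | m w ≤ q} :=
        G.subPos_eq_of_max hmax q
      have hvSPq : v ∈ G.subPos {w ∈ G.pos | q < m w} := by
        rw [hSPq]
        exact ⟨hvG, by omega⟩
      have huSPq : u ∈ G.subPos {w ∈ G.pos | q < m w} := by
        rw [hSPq]
        exact ⟨hupos, by omega⟩
      have hpre : v ∈ (G.subLE m q).pre (q % 2) {w ∈ G.pos | m w = q} := by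
        refine Or.inl ⟨?_, u, ⟨hupos, hru_m.symm⟩, hmv, hvSPq, huSPq⟩
        show v ∈ (G.sub {w ∈ G.pos | q < m w}).posOf (q % 2)
        rw [PGame.sub_posOf_eq]
        refine ⟨?_, hvSPq⟩
        rw [hq2]
        exact hvpos
      rw [heq] at hpre
      have hvA : v ∈ {w ∈ G.pos | m w = q} := by
        rw [heq]
        exact PGame.pre_atr_subset _ _ _ hpre
      have := hvA.2
      omega
    omega
  have hne : {n | ∃ v u, v ∈ R ∩ G.posOf (1 - s.p % 2) ∧ G.mv v u ∧
      u ∈ G.pos \ R ∧ s.r u = n}.Nonempty := by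
    obtain ⟨v, hv⟩ := Set.nonempty_iff_ne_empty.2 hopen
    obtain ⟨hvpre, hvR⟩ := hv
    rcases hvpre with ⟨hvp, u, hu, hmv⟩ | ⟨hvp, hall⟩
    · exact ⟨s.r u, v, u, ⟨hvR, hvp⟩, hmv, hu, rfl⟩
    · exfalso
      have hvSP : v ∈ G.subPos {v ∈ G.pos | s.p < s.r v} := (hsub' hvR).2
      have hesc : v ∈ (G.atState s).esc (1 - s.p % 2) R := by
        refine ⟨Or.inr ⟨?_, ?_⟩, hvR⟩
        · show v ∈ (G.sub {v ∈ G.pos | s.p < s.r v}).posOf (1 - (1 - s.p % 2))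
          rw [PGame.sub_posOf_eq]
          exact ⟨hvp, hvSP⟩
        · intro u hu
          have hu' : G.mv v u ∧ v ∈ G.subPos {v ∈ G.pos | s.p < s.r v} ∧
              u ∈ G.subPos {v ∈ G.pos | s.p < s.r v} := hu
          have h1 := hall u hu'.1
          refine ⟨?_, h1.2⟩
          show u ∈ (G.sub {v ∈ G.pos | s.p < s.r v}).pos
          rw [PGame.sub_pos_eq]
          exact ⟨h1.1, hu'.2.2⟩
      exact absurd (hclosed ▸ hesc) (Set.notMem_empty v)
  exact ⟨hne, (claim2 _ (Nat.sInf_mem hne)).2, (claim2 _ (Nat.sInf_mem hne)).1⟩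
end

section
/- Let D = (G, S, ≻, query, succ) be a dominion space for a parity game G. Define s₀ := ⊤ and, as long as the pair query(s_i) is an open quasi dominion pair, s_{i+1} := succ(s_i, query(s_i)). Then this sequence is finite; at its last state s the pair (Q, α) := query(s) is closed, and Q is an α-dominion in G. -/
open Filter Set

open PGame in
/-- A dominion space for a parity game `G`: a well-founded strict partial order of
states with a top element, a compatibility relation between states and open quasi
dominion pairs, a query operator extracting quasi dominion pairs (compatible with the
state whenever open), and a successor operator decreasing in the order on compatible
pairs. -/
structure DomSpace {V : Type*} (G : PGame V) where
  S : Type*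
  top : S
  lt : S → S → Prop
  lt_trans : Transitive lt
  lt_irrefl : Irreflexive lt
  wf : WellFounded lt
  compat : S → Set V × ℕ → Prop
  compat_mem : ∀ s Q α, compat s (Q, α) →
    (α = 0 ∨ α = 1) ∧ G.QuasiDom α Q ∧ G.esc (1 - α) Q ≠ ∅
  query : S → Set V × ℕ
  query_mem : ∀ s, ((query s).2 = 0 ∨ (query s).2 = 1) ∧ G.QuasiDom (query s).2 (query s).1
  query_compat : ∀ s, G.esc (1 - (query s).2) (query s).1 ≠ ∅ → compat s (query s)
  succ : S → Set V × ℕ → S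
  succ_lt : ∀ s Qα, compat s Qα → lt (succ s Qα) s

/-!
The search terminates because every open query is compatible with its state, so `succ` strictly
decreases the state in a well-founded order. The last query `(Q, α)` is closed, and a closed
quasi `α`-dominion is an `α`-dominion. The opponent can never leave `Q`, and the witness strategy
is total on `Q ∩ Pos_α` (otherwise a play would stop, which it may only do in the empty escape
set). Against an arbitrary, possibly non-positional, opponent the priority of a play is that of
some position `w` visited infinitely often, after which no higher priority occurs. Between two
such visits of `w` the opponent may as well play positionally, always moving as after the *last*
visit of the current position: the resulting play cycles through `w` forever, so its priority is
`pr w`, which the quasi-dominion property forces to have parity `α`.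
-/

open Filter Set Function

section LimsupNat

variable {u : ℕ → ℕ}

lemma limsup_eq_of_eventually_le_of_frequently_eq {m : ℕ}
    (hle : ∀ᶠ t in atTop, u t ≤ m) (hfreq : ∃ᶠ t in atTop, u t = m) :
    limsup u atTop = m :=
  le_antisymm (limsup_le_of_le (isCoboundedUnder_le_of_le atTop fun t => Nat.zero_le (u t)) hle)
    (le_limsup_of_frequently_le (hfreq.mono fun _ h => h.ge) ⟨m, hle⟩)

lemma eventually_le_limsup_of_le {b : ℕ} (hu : ∀ t, u t ≤ b) :
    ∀ᶠ t in atTop, u t ≤ limsup u atTop :=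
  (eventually_lt_of_limsup_lt (Nat.lt_succ_self _) (isBoundedUnder_of ⟨b, hu⟩)).mono
    fun _ => Nat.le_of_lt_succ

lemma frequently_eq_limsup_of_le {b : ℕ} (hu : ∀ t, u t ≤ b) :
    ∃ᶠ t in atTop, u t = limsup u atTop := by
  intro hne
  have hlt : ∀ᶠ t in atTop, u t < limsup u atTop :=
    (hne.and (eventually_le_limsup_of_le hu)).mono fun _ ht => lt_of_le_of_ne ht.2 ht.1
  obtain ⟨t, ht⟩ := hlt.exists
  have : limsup u atTop ≤ limsup u atTop - 1 :=
    limsup_le_of_le (isCoboundedUnder_le_of_le atTop fun t => Nat.zero_le (u t))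
      (hlt.mono fun _ h => Nat.le_sub_one_of_lt h)
  omega

end LimsupNat

section Cycles

variable {V : Type*}

lemma exists_cycle_attaining_limsup (f : V → ℕ) {π : ℕ → V} (hπ : (range π).Finite) :
    ∃ n0 n1, n0 < n1 ∧ π n0 = π n1 ∧ f (π n0) = limsup (fun t => f (π t)) atTop ∧
      ∀ j, n0 ≤ j → f (π j) ≤ f (π n0) := by
  obtain ⟨b, hb⟩ := (hπ.image f).bddAbove
  have hbound : ∀ t, f (π t) ≤ b := fun t => hb ⟨π t, mem_range_self t, rfl⟩
  obtain ⟨N, hN⟩ := eventually_atTop.1 (eventually_le_limsup_of_le hbound)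
  have hinf : {t | N ≤ t ∧ f (π t) = limsup (fun t => f (π t)) atTop}.Infinite :=
    Nat.frequently_atTop_iff_infinite.1
      (((frequently_eq_limsup_of_le hbound).and_eventually (eventually_ge_atTop N)).mono
        fun _ h => ⟨h.2, h.1⟩)
  obtain ⟨n0, ⟨hN0, hlim⟩, n1, -, hn, hcyc⟩ :=
    hinf.exists_lt_map_eq_of_mapsTo (mapsTo_range π _) hπ
  exact ⟨n0, n1, hn, hcyc, hlim, fun j hj => hlim ▸ hN j (hN0.trans hj)⟩

lemma exists_periodicPt_of_segment {π : ℕ → V} {n0 n1 : ℕ} (hn : n0 < n1)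
    (hcyc : π n0 = π n1) :
    ∃ g : V → V, (∀ j ∈ Ico n0 n1, ∃ k ∈ Ico n0 n1, π k = π j ∧ g (π j) = π (k + 1)) ∧
      ∃ p, 0 < p ∧ IsPeriodicPt g p (π n0) := by
  -- `g` jumps to the successor of the last visit: this makes the index strictly increase.
  let last : V → ℕ := fun v => sSup {k | k ∈ Ico n0 n1 ∧ π k = v}
  have hbdd : ∀ v, BddAbove {k | k ∈ Ico n0 n1 ∧ π k = v} := fun v =>
    bddAbove_Ico.mono fun k hk => hk.1
  have hlast : ∀ j ∈ Ico n0 n1, (last (π j) ∈ Ico n0 n1 ∧ π (last (π j)) = π j) ∧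
      j ≤ last (π j) := fun j hj =>
    ⟨Nat.sSup_mem (s := {k | k ∈ Ico n0 n1 ∧ π k = π j}) ⟨j, hj, rfl⟩ (hbdd _),
      le_csSup (hbdd _) ⟨hj, rfl⟩⟩
  let g : V → V := fun v => π (last v + 1)
  have hreach : ∀ d, ∀ j ∈ Ico n0 n1, n1 - j ≤ d → ∃ t, g^[t + 1] (π j) = π n1 := by
    intro d
    induction d with
    | zero => exact fun j hj hd => absurd hj.2 (by omega)
    | succ d ih =>
      intro j hj hd
      obtain ⟨⟨hmem, -⟩, hle⟩ := hlast j hj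
      rcases (show last (π j) + 1 ≤ n1 from hmem.2).eq_or_lt with heq | hlt
      · exact ⟨0, by simp [g, heq]⟩
      · obtain ⟨t, ht⟩ := ih (last (π j) + 1) ⟨by have := hmem.1; omega, hlt⟩ (by omega)
        exact ⟨t + 1, by rw [iterate_succ_apply]; exact ht⟩
  obtain ⟨t, ht⟩ := hreach _ n0 ⟨le_rfl, hn⟩ le_rfl
  exact ⟨g, fun j hj => ⟨last (π j), (hlast j hj).1.1, (hlast j hj).1.2, rfl⟩,
    t + 1, t.succ_pos, ht.trans hcyc.symm⟩

lemma mapsTo_image_Ico_of_segment {π : ℕ → V} {g : V → V} {n0 n1 : ℕ} (hn : n0 < n1)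
    (hcyc : π n0 = π n1)
    (hg : ∀ j ∈ Ico n0 n1, ∃ k ∈ Ico n0 n1, π k = π j ∧ g (π j) = π (k + 1)) :
    MapsTo g (π '' Ico n0 n1) (π '' Ico n0 n1) := by
  rintro _ ⟨j, hj, rfl⟩
  obtain ⟨k, hk, -, hgk⟩ := hg j hj
  rw [hgk]
  rcases (show k + 1 ≤ n1 from hk.2).eq_or_lt with heq | hlt
  · rw [heq, ← hcyc]
    exact mem_image_of_mem π ⟨le_rfl, hn⟩
  · exact mem_image_of_mem π ⟨hk.1.trans (Nat.le_succ k), hlt⟩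

lemma limsup_apply_iterate_of_isPeriodicPt (f : V → ℕ) {g : V → V} {w : V} {p : ℕ} (hp : 0 < p)
    (hper : IsPeriodicPt g p w) (hle : ∀ t, f (g^[t] w) ≤ f w) :
    limsup (fun t => f (g^[t] w)) atTop = f w :=
  limsup_eq_of_eventually_le_of_frequently_eq (Eventually.of_forall hle)
    (frequently_atTop.2 fun N =>
      ⟨p * N, Nat.le_mul_of_pos_left N hp, by rw [(hper.mul_const N).eq]⟩)

end Cycles

namespace PGame

variable {V : Type*} {G : PGame V} {α : ℕ} {Q : Set V} {σa : V → Option V} {v : V}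

lemma posOf_subset_pos (G : PGame V) (α : ℕ) : G.posOf α ⊆ G.pos := by
  unfold posOf pos
  split_ifs
  exacts [subset_union_left, subset_union_right]

lemma pos_eq_posOf_union_posOf (hα : α = 0 ∨ α = 1) : G.pos = G.posOf α ∪ G.posOf (1 - α) := by
  rcases hα with rfl | rfl <;> simp [pos, posOf, union_comm]

lemma step_of_mem_posOf (hα : α = 0 ∨ α = 1) (σa σb : V → Option V) (hv : v ∈ G.posOf α) :
    G.step (if α = 0 then σa else σb) (if α = 0 then σb else σa) v = σa v := by
  rcases hα with rfl | rfl
  · simp_all [step, posOf]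
  · simp_all [step, posOf, disjoint_right.1 G.disj hv]

lemma step_of_mem_posOf_opp (hα : α = 0 ∨ α = 1) (σa σb : V → Option V)
    (hv : v ∈ G.posOf (1 - α)) :
    G.step (if α = 0 then σa else σb) (if α = 0 then σb else σa) v = σb v := by
  rcases hα with rfl | rfl
  · simp_all [step, posOf, disjoint_right.1 G.disj hv]
  · simp_all [step, posOf]

lemma play_eq_some_iterate {σ0 σ1 : V → Option V} {g : V → V} {S : Set V} (hg : MapsTo g S S)
    (hstep : ∀ v ∈ S, G.step σ0 σ1 v = some (g v)) {w : V} (hw : w ∈ S) :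
    ∀ t, G.play σ0 σ1 w t = some (g^[t] w)
  | 0 => rfl
  | t + 1 => by
    rw [play, play_eq_some_iterate hg hstep hw t, Option.bind_some, hstep _ (hg.iterate t hw),
      iterate_succ_apply']

lemma mem_of_mv_of_notMem_esc {β : ℕ} {u : V} (hvQ : v ∈ Q) (hv : v ∈ G.posOf β)
    (hesc : v ∉ G.esc β Q) (hmv : G.mv v u) : u ∈ Q := by
  by_contra hu
  exact hesc ⟨Or.inl ⟨hv, u, ⟨(G.mv_mem hmv).2, hu⟩, hmv⟩, hvQ⟩

lemma exists_isStrat_intOf (G : PGame V) (β : ℕ) (Q : Set V) :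
    ∃ σ, G.IsStrat β Q σ ∧ G.intOf β Q ⊆ {v | (σ v).isSome} := by
  classical
  have hmove : ∀ v ∈ G.intOf β Q, ∃ u ∈ Q, G.mv v u := fun v ⟨⟨hvQ, hv⟩, hesc⟩ =>
    let ⟨u, hu⟩ := G.leftTotal v (G.posOf_subset_pos β hv)
    ⟨u, mem_of_mv_of_notMem_esc hvQ hv hesc hu, hu⟩
  refine ⟨fun v => if h : v ∈ G.intOf β Q then some (hmove v h).choose else none, ?_, ?_⟩
  · intro v u h
    dsimp only at h
    split_ifs at h with hv
    cases h
    exact ⟨hv.1, (hmove v hv).choose_spec⟩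
  · intro v hv
    simp [hv]

lemma exists_isStrat_intOf_eqOn (G : PGame V) (β : ℕ) {Q S : Set V} {g : V → V}
    (hg : ∀ v ∈ S ∩ G.posOf β, v ∈ Q ∧ g v ∈ Q ∧ G.mv v (g v)) :
    ∃ σ, G.IsStrat β Q σ ∧ G.intOf β Q ⊆ {v | (σ v).isSome} ∧
      ∀ v ∈ S ∩ G.posOf β, σ v = some (g v) := by
  classical
  obtain ⟨σ0, hσ0, hdom0⟩ := G.exists_isStrat_intOf β Q
  refine ⟨fun v => if v ∈ S ∩ G.posOf β then some (g v) else σ0 v, ?_, ?_, fun v hv => if_pos hv⟩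
  · intro v u h
    dsimp only at h
    split_ifs at h with hv
    · cases h
      exact ⟨⟨(hg v hv).1, hv.2⟩, (hg v hv).2⟩
    · exact hσ0 v u h
  · intro v hv
    show (if v ∈ S ∩ G.posOf β then some (g v) else σ0 v).isSome
    split_ifs
    exacts [rfl, hdom0 hv]

def IsQuasiDomStrat (G : PGame V) (α : ℕ) (Q : Set V) (σa : V → Option V) : Prop :=
  G.IsStrat α Q σa ∧
    ∀ σb : V → Option V, G.IsStrat (1 - α) Q σb →
      G.intOf (1 - α) Q ⊆ {v | (σb v).isSome} →
      ∀ v ∈ Q,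
        (((∀ n, (G.play (if α = 0 then σa else σb) (if α = 0 then σb else σa) v n).isSome) →
          Filter.limsup (G.playPr (if α = 0 then σa else σb) (if α = 0 then σb else σa) v)
            Filter.atTop % 2 = α) ∧
        (∀ n u, G.play (if α = 0 then σa else σb) (if α = 0 then σb else σa) v n = some u →
          G.play (if α = 0 then σa else σb) (if α = 0 then σb else σa) v (n + 1) = none →
          u ∈ G.esc (1 - α) Q))

lemma quasiDom_iff :
    G.QuasiDom α Q ↔ Q.Nonempty ∧ Q ⊆ G.pos ∧ ∃ σa, G.IsQuasiDomStrat α Q σa :=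
  Iff.rfl

namespace IsQuasiDomStrat

lemma isSome_of_esc_eq_empty (hα : α = 0 ∨ α = 1) (hσ : G.IsQuasiDomStrat α Q σa)
    (hcl : G.esc (1 - α) Q = ∅) (hvQ : v ∈ Q) (hv : v ∈ G.posOf α) : (σa v).isSome := by
  obtain ⟨σb, hσb, hdom⟩ := G.exists_isStrat_intOf (1 - α) Q
  rw [Option.isSome_iff_ne_none]
  intro hnone
  have hstop := (hσ.2 σb hσb hdom v hvQ).2 0 v rfl
    ((step_of_mem_posOf hα σa σb hv).trans hnone)
  rw [hcl] at hstop
  exact hstop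

lemma pr_mod_two_of_cycle (hα : α = 0 ∨ α = 1) (hσ : G.IsQuasiDomStrat α Q σa)
    (hQpos : Q ⊆ G.pos) {π : ℕ → V} {n0 n1 : ℕ} (hn : n0 < n1) (hcyc : π n0 = π n1)
    (hπQ : ∀ j ∈ Ico n0 n1, π j ∈ Q)
    (hπ : ∀ j ∈ Ico n0 n1, (π j ∈ G.posOf α → σa (π j) = some (π (j + 1))) ∧
      (π j ∈ G.posOf (1 - α) → G.mv (π j) (π (j + 1))))
    (hmax : ∀ j ∈ Ico n0 n1, G.pr (π j) ≤ G.pr (π n0)) :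
    G.pr (π n0) % 2 = α := by
  obtain ⟨g, hg, p, hp, hper⟩ := exists_periodicPt_of_segment hn hcyc
  set S := π '' Ico n0 n1
  have hw : π n0 ∈ S := mem_image_of_mem π ⟨le_rfl, hn⟩
  have hgS : MapsTo g S S := mapsTo_image_Ico_of_segment hn hcyc hg
  obtain ⟨σb, hσb, hdom, hσbg⟩ := G.exists_isStrat_intOf_eqOn (1 - α) (S := S) (g := g) <| by
    rintro _ ⟨⟨j, hj, rfl⟩, hB⟩
    obtain ⟨k, hk, hkj, hgk⟩ := hg j hj
    obtain ⟨j', hj', hj'g⟩ := hgS (mem_image_of_mem π hj)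
    refine ⟨hπQ j hj, hj'g ▸ hπQ j' hj', ?_⟩
    rw [hgk, ← hkj]
    exact (hπ k hk).2 (hkj ▸ hB)
  set σ0 := if α = 0 then σa else σb
  set σ1 := if α = 0 then σb else σa
  have hstep : ∀ v ∈ S, G.step σ0 σ1 v = some (g v) := by
    rintro _ ⟨j, hj, rfl⟩
    obtain ⟨k, hk, hkj, hgk⟩ := hg j hj
    rcases (pos_eq_posOf_union_posOf hα ▸ hQpos (hπQ j hj)) with hA | hB
    · rw [step_of_mem_posOf hα σa σb hA, hgk, ← hkj]
      exact (hπ k hk).1 (hkj ▸ hA)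
    · rw [step_of_mem_posOf_opp hα σa σb hB]
      exact hσbg _ ⟨mem_image_of_mem π hj, hB⟩
  have hplay := play_eq_some_iterate hgS hstep hw
  have hpr : G.playPr σ0 σ1 (π n0) = fun t => G.pr (g^[t] (π n0)) := funext fun t => by
    simp [playPr, hplay t]
  have hlimsup : limsup (G.playPr σ0 σ1 (π n0)) atTop = G.pr (π n0) := by
    rw [hpr]
    refine limsup_apply_iterate_of_isPeriodicPt G.pr hp hper fun t => ?_
    obtain ⟨j, hj, hjt⟩ := hgS.iterate t hw
    rw [← hjt]
    exact hmax j hj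
  rw [← hlimsup]
  exact (hσ.2 σb hσb hdom _ (hπQ n0 ⟨le_rfl, hn⟩)).1 fun t => by rw [hplay t]; rfl

end IsQuasiDomStrat

theorem QuasiDom.dominion_of_esc_eq_empty (hα : α = 0 ∨ α = 1) (hQ : G.QuasiDom α Q)
    (hcl : G.esc (1 - α) Q = ∅) : G.Dominion α Q := by
  obtain ⟨-, hQpos, σa, hσ⟩ := quasiDom_iff.1 hQ
  let σ : V → V := fun v => (σa v).getD v
  have hσa : ∀ v ∈ Q ∩ G.posOf α, σa v = some (σ v) := fun v hv => by
    obtain ⟨u, hu⟩ := Option.isSome_iff_exists.1 (hσ.isSome_of_esc_eq_empty hα hcl hv.1 hv.2)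
    simp [σ, hu]
  have hσQ : ∀ v ∈ Q ∩ G.posOf α, σ v ∈ Q ∧ G.mv v (σ v) := fun v hv =>
    (hσ.1 v _ (hσa v hv)).2
  refine ⟨hQpos, σ, hσQ, fun π hπ0 hπ => ?_⟩
  have hπQ : ∀ i, π i ∈ Q := by
    intro i
    induction i with
    | zero => exact hπ0
    | succ i ih =>
      rcases (pos_eq_posOf_union_posOf hα ▸ hQpos ih) with hA | hB
      · rw [(hπ i).1 hA]
        exact (hσQ _ ⟨ih, hA⟩).1
      · exact mem_of_mv_of_notMem_esc ih hB (hcl ▸ notMem_empty _) ((hπ i).2 hB)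
  refine ⟨hπQ, ?_⟩
  obtain ⟨n0, n1, hn, hcyc, hlim, hmax⟩ := exists_cycle_attaining_limsup G.pr
    ((G.finpos.subset hQpos).subset (range_subset_iff.2 hπQ))
  rw [← hlim]
  refine hσ.pr_mod_two_of_cycle hα hQpos hn hcyc (fun j _ => hπQ j) (fun j _ => ⟨fun hA => ?_,
    (hπ j).2⟩) fun j hj => hmax j hj.1
  rw [(hπ j).1 hA]
  exact hσa _ ⟨hπQ j, hA⟩

end PGame

namespace DomSpace

variable {V : Type*} {G : PGame V}

lemma exists_esc_query_eq_empty (D : DomSpace G) (f : ℕ → D.S)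
    (hstep : ∀ n, f (n + 1) = D.succ (f n) (D.query (f n))) :
    ∃ n, G.esc (1 - (D.query (f n)).2) (D.query (f n)).1 = ∅ := by
  by_contra! hopen
  obtain ⟨_, ⟨n, rfl⟩, hmin⟩ := D.wf.has_min (range f) ⟨f 0, 0, rfl⟩
  exact hmin _ ⟨n + 1, rfl⟩ (hstep n ▸ D.succ_lt _ _ (D.query_compat _ (hopen n).ne_empty))

end DomSpace

theorem dominion_search_general {V : Type*} (G : PGame V) (D : DomSpace G)
    (f : ℕ → D.S)
    (hstep : ∀ n, f (n + 1) = D.succ (f n) (D.query (f n))) :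
    ∃ n, (∀ i < n, G.esc (1 - (D.query (f i)).2) (D.query (f i)).1 ≠ ∅) ∧
      G.esc (1 - (D.query (f n)).2) (D.query (f n)).1 = ∅ ∧
      G.Dominion (D.query (f n)).2 (D.query (f n)).1 := by
  classical
  have hclosed := D.exists_esc_query_eq_empty f hstep
  obtain ⟨hα, hQ⟩ := D.query_mem (f (Nat.find hclosed))
  exact ⟨Nat.find hclosed, fun i hi => Nat.find_min hclosed hi, Nat.find_spec hclosed,
    hQ.dominion_of_esc_eq_empty hα (Nat.find_spec hclosed)⟩

/-- **Soundness and completeness of the dominion search procedure.** Starting from the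
top state and repeatedly applying the successor operator to the queried quasi dominion
pair, the search eventually reaches a state whose queried pair `(Q, α)` is closed, and
then `Q` is an `α`-dominion in `G`. -/
theorem dominion_search {V : Type*} (G : PGame V) (D : DomSpace G)
    (f : ℕ → D.S) (h0 : f 0 = D.top)
    (hstep : ∀ n, f (n + 1) = D.succ (f n) (D.query (f n))) :
    ∃ n, (∀ i < n, G.esc (1 - (D.query (f i)).2) (D.query (f i)).1 ≠ ∅) ∧
      G.esc (1 - (D.query (f n)).2) (D.query (f n)).1 = ∅ ∧
      G.Dominion (D.query (f n)).2 (D.query (f n)).1 :=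
  dominion_search_general G D f hstep
end
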